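/- Let W be a group and S a subgroup with exactly k distinct conjugates S₁, …, S_k, and suppose the normal core C = S₁ ∩ ⋯ ∩ S_k has finite index in W. Let N = N_W(S₁) ∩ ⋯ ∩ N_W(S_k). Then [W : C] ≤ [W : N] · [N_W(S) : S]^k ≤ k! · [N_W(S) : S]^k. -/

import Mathlib

/-!
Conjugation permutes the `k` conjugates of `S`, and `N` is the kernel of this permutation
representation, so `[W : N] ≤ k!`. For each conjugate `T = gSg⁻¹` we have `N ≤ N_W(T)`, hence
`[N : T ∩ N] ≤ [N_W(T) : T] = [N_W(S) : S]`; as `C ≤ N` is the intersection of the `T ∩ N`,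
`[N : C] ≤ [N_W(S) : S]^k`, and `[W : C] = [W : N] · [N : C]`.
-/

/-- The set of all conjugates `wSw⁻¹` of a subgroup `S` of `W`. -/
def subgroupConjugates {W : Type*} [Group W] (S : Subgroup W) : Set (Subgroup W) :=
  Set.range fun w : W => Subgroup.map (MulAut.conj w).toMonoidHom S

open Pointwise MulAction Subgroup

namespace Subgroup

variable {G : Type*} [Group G]

theorem map_conj_eq_toConjAct_smul (g : G) (H : Subgroup G) :
    H.map (MulAut.conj g).toMonoidHom = ConjAct.toConjAct g • H := rfl

theorem normalizer_conjAct_smul (g : ConjAct G) (H : Subgroup G) :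
    normalizer ((g • H : Subgroup G) : Set G) = g • normalizer (H : Set G) := by
  rw [← ConjAct.toConjAct_ofConjAct g, ← map_conj_eq_toConjAct_smul,
    ← map_conj_eq_toConjAct_smul, map_equiv_normalizer_eq]

theorem relIndex_normalizer_conjAct_smul (g : ConjAct G) (H : Subgroup G) :
    (g • H).relIndex (normalizer ((g • H : Subgroup G) : Set G)) =
      H.relIndex (normalizer (H : Set G)) := by
  rw [normalizer_conjAct_smul, relIndex_pointwise_smul]

theorem relIndex_iInf_le_pow {ι : Type*} [Finite ι] (f : ι → Subgroup G) (L : Subgroup G)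
    {r : ℕ} (hf : ∀ i, (f i).relIndex L ≤ r) : (⨅ i, f i).relIndex L ≤ r ^ Nat.card ι := by
  have := Fintype.ofFinite ι
  calc (⨅ i, f i).relIndex L ≤ ∏ i, (f i).relIndex L := relIndex_iInf_le f
    _ ≤ ∏ _i : ι, r := Finset.prod_le_prod' fun i _ => hf i
    _ = r ^ Nat.card ι := by rw [Finset.prod_const, Finset.card_univ, Nat.card_eq_fintype_card]

theorem relIndex_le_relIndex_normalizer {H K : Subgroup G} [H.FiniteIndex]
    (hK : K ≤ normalizer (H : Set G)) : H.relIndex K ≤ H.relIndex (normalizer (H : Set G)) :=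
  relIndex_le_of_le_right hK
    (isFiniteRelIndex_iff_relIndex_ne_zero.mp isFiniteRelIndex_of_finiteIndex)

theorem iInf_normalizer_orbit_eq_ker (S : Subgroup G) :
    ⨅ T ∈ orbit (ConjAct G) S, normalizer (T : Set G) =
      ((toPermHom (ConjAct G) (orbit (ConjAct G) S)).comp
        (ConjAct.toConjAct : G ≃* ConjAct G).toMonoidHom).ker := by
  ext w
  rw [MonoidHom.mem_ker, Equiv.Perm.ext_iff]
  simp only [mem_iInf, Subtype.forall, Subtype.ext_iff, MonoidHom.comp_apply, toPermHom_apply,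
    toPerm_apply, orbit.coe_smul, Equiv.Perm.coe_one, id_eq, MulEquiv.coe_toMonoidHom,
    conjAct_pointwise_smul_iff]

end Subgroup

theorem MonoidHom.index_ker_le_factorial {G X : Type*} [Group G] [Finite X]
    (f : G →* Equiv.Perm X) : f.ker.index ≤ (Nat.card X).factorial := by
  rw [Subgroup.index_ker, ← Nat.card_perm]
  exact Subgroup.card_le_card_group _

theorem subgroupConjugates_eq_orbit {W : Type*} [Group W] (S : Subgroup W) :
    subgroupConjugates S = orbit (ConjAct W) S :=
  ConjAct.toConjAct.surjective.range_comp fun g => g • S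

/-- Let `S` be a subgroup of `W` with exactly `k` distinct conjugates, whose normal core `C`
(the intersection of all the conjugates) has finite index in `W`, and let `N` be the
intersection of the normalizers of all the conjugates.  Then
`[W : C] ≤ [W : N] · [N_W(S) : S]^k ≤ k! · [N_W(S) : S]^k`. -/
theorem core_index_le {W : Type*} [Group W] (S : Subgroup W)
    (k : ℕ) (hfin : (subgroupConjugates S).Finite)
    (hcard : Nat.card (subgroupConjugates S) = k)
    (C : Subgroup W) (hC : C = ⨅ T ∈ subgroupConjugates S, T)
    (N : Subgroup W) (hN : N = ⨅ T ∈ subgroupConjugates S, Subgroup.normalizer T)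
    (hCfin : C.FiniteIndex) :
    C.index ≤ N.index * (S.relIndex (Subgroup.normalizer (S : Set W))) ^ k ∧
      N.index * (S.relIndex (Subgroup.normalizer (S : Set W))) ^ k ≤
        Nat.factorial k * (S.relIndex (Subgroup.normalizer (S : Set W))) ^ k := by
  rw [subgroupConjugates_eq_orbit] at hfin hcard hC hN
  have := hfin.to_subtype
  have hNk : N.index ≤ k.factorial := by
    rw [hN, iInf_normalizer_orbit_eq_ker, ← hcard]
    exact MonoidHom.index_ker_le_factorial _
  have hCN : C ≤ N := hC ▸ hN ▸ iInf₂_mono fun T _ => T.le_normalizer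
  refine ⟨?_, Nat.mul_le_mul_right _ hNk⟩
  rw [← relIndex_mul_index hCN, mul_comm]
  refine Nat.mul_le_mul_left _ ?_
  rw [hC, iInf_subtype', ← hcard]
  refine relIndex_iInf_le_pow _ _ fun ⟨T, g, hT⟩ => ?_
  subst hT
  have : (g • S).FiniteIndex := finiteIndex_of_le (hC ▸ iInf₂_le _ ⟨g, rfl⟩ : C ≤ g • S)
  calc (g • S).relIndex N ≤ (g • S).relIndex (normalizer ((g • S : Subgroup W) : Set W)) :=
        relIndex_le_relIndex_normalizer (hN ▸ iInf₂_le _ ⟨g, rfl⟩)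
    _ = S.relIndex (normalizer (S : Set W)) := relIndex_normalizer_conjAct_smul g S
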